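/- arXiv:1612.04091 — 8 statements merged into one kernel-verified Lean document; each statement's English description precedes it below -/
import Mathlib

section
/- Identifiability of the plug-in age-period Lee-Carter model with random-walk factor (Theorem 1). Fix integers X ≥ 0 and T ≥ 2 and a real number c. Let θ = (α, β, μ, σe², σε²) and θ̃ = (α̃, β̃, μ̃, σ̃e², σ̃ε²) be two parameter tuples in Θ, i.e. α, β, α̃, β̃ ∈ ℝ^{X+1} with ∑_{x=0}^X β_x = 1 and ∑_{x=0}^X β̃_x = 1, μ, μ̃ ∈ ℝ, and σe², σε², σ̃e², σ̃ε² > 0. If f_θ(x,t) = f_θ̃(x,t) for all x ∈ {0,…,X} and t ∈ {1,…,T}, and g_θ(x,y,s,t) = g_θ̃(x,y,s,t) for all x,y ∈ {0,…,X} and s,t ∈ {1,…,T}, then θ = θ̃ (i.e. α = α̃, β = β̃, μ = μ̃, σe² = σ̃e², σε² = σ̃ε²). -/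
/-- Mean function of the plug-in age-period Lee-Carter model with random-walk factor:
`f_θ(x,t) = α_x + β_x μ t + β_x c`. -/
noncomputable def apMean {X : ℕ} (α β : Fin (X + 1) → ℝ) (μ c : ℝ)
    (x : Fin (X + 1)) (t : ℕ) : ℝ :=
  α x + β x * μ * t + β x * c

/-- Covariance function of the plug-in age-period Lee-Carter model with random-walk factor:
`g_θ(x,y,s,t) = β_x β_y σe² min{s,t} + 1{x=y, s=t} σε²`. -/
noncomputable def apCov {X : ℕ} (β : Fin (X + 1) → ℝ) (σe2 σε2 : ℝ)
    (x y : Fin (X + 1)) (s t : ℕ) : ℝ :=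
  β x * β y * σe2 * (min s t : ℕ) + (if x = y ∧ s = t then σε2 else 0)

/-- Theorem 1: identifiability of the plug-in age-period Lee-Carter model with
random-walk factor, under the constraint `∑ β_x = 1`, for `T ≥ 2`. -/
theorem ap_random_walk_identifiable
    (X T : ℕ) (hT : 2 ≤ T) (c : ℝ)
    (α β α' β' : Fin (X + 1) → ℝ) (μ μ' σe2 σε2 σe2' σε2' : ℝ)
    (hβ : ∑ x, β x = 1) (hβ' : ∑ x, β' x = 1)
    (hσe2 : 0 < σe2) (hσε2 : 0 < σε2) (hσe2' : 0 < σe2') (hσε2' : 0 < σε2')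
    (hf : ∀ x : Fin (X + 1), ∀ t : ℕ, 1 ≤ t → t ≤ T →
      apMean α β μ c x t = apMean α' β' μ' c x t)
    (hg : ∀ x y : Fin (X + 1), ∀ s t : ℕ, 1 ≤ s → s ≤ T → 1 ≤ t → t ≤ T →
      apCov β σe2 σε2 x y s t = apCov β' σe2' σε2' x y s t) :
    α = α' ∧ β = β' ∧ μ = μ' ∧ σe2 = σe2' ∧ σε2 = σε2' := by
  have h1 : ∀ x y : Fin (X + 1), β x * β y * σe2 = β' x * β' y * σe2' := by
    intro x y
    have := hg x y 1 2 le_rfl (by omega) (by omega) hT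
    simp [apCov] at this
    linarith
  have he : σe2 = σe2' := by
    have hsum : ∑ x, ∑ y, β x * β y * σe2 = ∑ x, ∑ y, β' x * β' y * σe2' := by
      exact Finset.sum_congr rfl fun x _ => Finset.sum_congr rfl fun y _ => h1 x y
    have l1 : ∑ x, ∑ y, β x * β y * σe2 = σe2 := by
      simp_rw [mul_assoc, ← Finset.mul_sum]
      rw [← Finset.sum_mul, hβ, one_mul, ← Finset.sum_mul, hβ, one_mul]
    have l2 : ∑ x, ∑ y, β' x * β' y * σe2' = σe2' := by
      simp_rw [mul_assoc, ← Finset.mul_sum]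
      rw [← Finset.sum_mul, hβ', one_mul, ← Finset.sum_mul, hβ', one_mul]
    rw [l1, l2] at hsum; exact hsum
  have hb : β = β' := by
    funext x
    have hsum : ∑ y, β x * β y * σe2 = ∑ y, β' x * β' y * σe2' :=
      Finset.sum_congr rfl fun y _ => h1 x y
    have l1 : ∑ y, β x * β y * σe2 = β x * σe2 := by
      have : ∀ y, β x * β y * σe2 = β y * (β x * σe2) := fun y => by ring
      simp_rw [this]
      rw [← Finset.sum_mul, hβ, one_mul]
    have l2 : ∑ y, β' x * β' y * σe2' = β' x * σe2' := by
      have : ∀ y, β' x * β' y * σe2' = β' y * (β' x * σe2') := fun y => by ring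
      simp_rw [this]
      rw [← Finset.sum_mul, hβ', one_mul]
    rw [l1, l2, ← he] at hsum
    exact mul_right_cancel₀ (ne_of_gt hσe2) hsum
  have hε : σε2 = σε2' := by
    have x0 : Fin (X + 1) := ⟨0, Nat.succ_pos X⟩
    have := hg x0 x0 1 1 le_rfl (by omega) le_rfl (by omega)
    simp [apCov] at this
    rw [← hb, ← he] at this
    linarith
  have hμ : μ = μ' := by
    have hd : ∀ x : Fin (X + 1), β x * μ = β x * μ' := by
      intro x
      have h1 := hf x 1 le_rfl (by omega)
      have h2 := hf x 2 (by omega) hT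
      simp [apMean, ← hb] at h1 h2
      push_cast at h1 h2
      linarith
    have hsum : ∑ x, β x * μ = ∑ x, β x * μ' :=
      Finset.sum_congr rfl fun x _ => hd x
    rw [← Finset.sum_mul, ← Finset.sum_mul, hβ, one_mul, one_mul] at hsum
    exact hsum
  have ha : α = α' := by
    funext x
    have h1 := hf x 1 le_rfl (by omega)
    simp [apMean, ← hb, ← hμ] at h1
    linarith
  exact ⟨ha, hb, hμ, he, hε⟩
end

section
/- Identifiability of the plug-in age-period-cohort Lee-Carter model with two independent random-walk factors (Theorem 2). Fix integers X > 0 and T > X + 2 and real numbers c₀, c₁. Let θ = (α, β⁰, β¹, μ₀, μ₁, σ₀², σ₁², σε²) and θ̃ = (α̃, β̃⁰, β̃¹, μ̃₀, μ̃₁, σ̃₀², σ̃₁², σ̃ε²) be two parameter tuples in Θᶜᵗ, i.e. all the vectors lie in ℝ^{X+1}, ∑_{x=0}^X β⁰_x = ∑_{x=0}^X β¹_x = 1 with β⁰ ≠ β¹ (and likewise for the tilde parameters), and all variances σ₀², σ₁², σε², σ̃₀², σ̃₁², σ̃ε² are strictly positive. If F_θ(x,t) = F_θ̃(x,t) for all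 x ∈ {0,…,X}, t ∈ {1,…,T}, and G_θ(x,y,s,t) = G_θ̃(x,y,s,t) for all x,y ∈ {0,…,X}, s,t ∈ {1,…,T}, then θ = θ̃. -/
/-- Mean function of the plug-in age-period-cohort Lee-Carter model with two
independent random-walk factors:
`F_θ(x,t) = α_x + β⁰_x c₀ + β⁰_x μ₀ (t − x + X) + β¹_x c₁ + β¹_x μ₁ t`. -/
noncomputable def apcMean {X : ℕ} (α β0 β1 : Fin (X + 1) → ℝ) (μ0 μ1 c0 c1 : ℝ)
    (x : Fin (X + 1)) (t : ℕ) : ℝ :=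
  α x + β0 x * c0 + β0 x * μ0 * ((t : ℝ) - (x : ℕ) + X) + β1 x * c1 + β1 x * μ1 * t

/-- Covariance function of the plug-in age-period-cohort Lee-Carter model with two
independent random-walk factors:
`G_θ(x,y,s,t) = β⁰_x β⁰_y σ₀² min{s−x+X, t−y+X} + β¹_x β¹_y σ₁² min{s,t} + 1{x=y,s=t} σε²`. -/
noncomputable def apcCov {X : ℕ} (β0 β1 : Fin (X + 1) → ℝ) (σ02 σ12 σε2 : ℝ)
    (x y : Fin (X + 1)) (s t : ℕ) : ℝ :=
  β0 x * β0 y * σ02 * min ((s : ℝ) - (x : ℕ) + X) ((t : ℝ) - (y : ℕ) + X)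
    + β1 x * β1 y * σ12 * min (s : ℝ) (t : ℝ)
    + (if x = y ∧ s = t then σε2 else 0)

/-- From one fully-known row of the matrix `(x, y) ↦ β_x β_y σ` with a nonzero pivot,
together with the normalisations `∑ β = ∑ β' = 1` and `σ > 0`, identify `β` and `σ`. -/
lemma apc_aux_row {n : ℕ} (β β' : Fin n → ℝ) (σ σ' : ℝ) (hσ : 0 < σ)
    (hs : ∑ x, β x = 1) (hs' : ∑ x, β' x = 1) (x0 : Fin n) (hx0 : β x0 ≠ 0)
    (h : ∀ y, β x0 * β y * σ = β' x0 * β' y * σ') : β = β' ∧ σ = σ' := by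
  have h1 : β x0 * σ = β' x0 * σ' := by
    have c1 : ∑ y, β x0 * β y * σ = β x0 * σ := by
      rw [show (fun y => β x0 * β y * σ) = (fun y => β y * (β x0 * σ)) from by funext y; ring]
      rw [← Finset.sum_mul, hs, one_mul]
    have c2 : ∑ y, β' x0 * β' y * σ' = β' x0 * σ' := by
      rw [show (fun y => β' x0 * β' y * σ') = (fun y => β' y * (β' x0 * σ')) from by funext y; ring]
      rw [← Finset.sum_mul, hs', one_mul]
    rw [← c1, ← c2]
    exact Finset.sum_congr rfl fun y _ => h y
  have hne : β x0 * σ ≠ 0 := mul_ne_zero hx0 (ne_of_gt hσ)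
  have hb : β x0 = β' x0 := by
    have hz : (β x0 - β' x0) * (β x0 * σ) = 0 := by linear_combination h x0 - β' x0 * h1
    rcases mul_eq_zero.mp hz with hz | hz
    · linarith [sub_eq_zero.mp hz]
    · exact absurd hz hne
  have hσeq : σ = σ' := by
    have hb' : β' x0 ≠ 0 := by rw [← hb]; exact hx0
    rw [hb] at h1
    exact mul_left_cancel₀ hb' h1
  refine ⟨funext fun y => ?_, hσeq⟩
  have hy := h y
  rw [hb, hσeq] at hy
  have hb' : β' x0 * σ' ≠ 0 := by rw [← hb, ← hσeq]; exact hne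
  have : (β y - β' y) * (β' x0 * σ') = 0 := by linear_combination hy
  rcases mul_eq_zero.mp this with hz | hz
  · linarith [sub_eq_zero.mp hz]
  · exact absurd hz hb'

/-- From the fully-known matrix `(x, y) ↦ β_x β_y σ`, identify `β` and `σ`. -/
lemma apc_aux_full {n : ℕ} (β β' : Fin n → ℝ) (σ σ' : ℝ) (hσ : 0 < σ)
    (hs : ∑ x, β x = 1) (hs' : ∑ x, β' x = 1)
    (h : ∀ x y, β x * β y * σ = β' x * β' y * σ') : β = β' ∧ σ = σ' := by
  have : ∃ x0, β x0 ≠ 0 := by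
    by_contra hc
    push_neg at hc
    rw [Finset.sum_eq_zero (fun x _ => hc x)] at hs
    norm_num at hs
  obtain ⟨x0, hx0⟩ := this
  exact apc_aux_row β β' σ σ' hσ hs hs' x0 hx0 (h x0)

/-- Case lemma: given identification of both factor matrices off the `(last, last)`
entry, the sum identity at `(last, last)`, and a pivot for the second factor below
`last`, identify everything. -/
lemma apc_aux_main {n : ℕ} (β0 β1 β0' β1' : Fin (n+1) → ℝ) (σ02 σ12 σ02' σ12' : ℝ)
    (hσ02 : 0 < σ02) (hσ12 : 0 < σ12)
    (hβ0 : ∑ x, β0 x = 1) (hβ1 : ∑ x, β1 x = 1)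
    (hβ0' : ∑ x, β0' x = 1) (hβ1' : ∑ x, β1' x = 1)
    (ha : ∀ x y : Fin (n+1), (x:ℕ) < n ∨ (y:ℕ) < n →
      β0 x * β0 y * σ02 = β0' x * β0' y * σ02')
    (hb : ∀ x y : Fin (n+1), (x:ℕ) < n ∨ (y:ℕ) < n →
      β1 x * β1 y * σ12 = β1' x * β1' y * σ12')
    (hab : β0 (Fin.last n) * β0 (Fin.last n) * σ02 + β1 (Fin.last n) * β1 (Fin.last n) * σ12
      = β0' (Fin.last n) * β0' (Fin.last n) * σ02' + β1' (Fin.last n) * β1' (Fin.last n) * σ12')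
    (x0 : Fin (n+1)) (hx0n : (x0:ℕ) < n) (hx0 : β1 x0 ≠ 0) :
    β0 = β0' ∧ β1 = β1' ∧ σ02 = σ02' ∧ σ12 = σ12' := by
  obtain ⟨hb1, hs1⟩ := apc_aux_row β1 β1' σ12 σ12' hσ12 hβ1 hβ1' x0 hx0
    (fun y => hb x0 y (Or.inl hx0n))
  have haLL : β0 (Fin.last n) * β0 (Fin.last n) * σ02
      = β0' (Fin.last n) * β0' (Fin.last n) * σ02' := by
    rw [hb1, hs1] at hab; linarith
  have haf : ∀ x y, β0 x * β0 y * σ02 = β0' x * β0' y * σ02' := by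
    intro x y
    by_cases hx : (x:ℕ) < n
    · exact ha x y (Or.inl hx)
    by_cases hy : (y:ℕ) < n
    · exact ha x y (Or.inr hy)
    have hxl : x = Fin.last n := Fin.ext (by have := x.isLt; simp [Fin.last]; omega)
    have hyl : y = Fin.last n := Fin.ext (by have := y.isLt; simp [Fin.last]; omega)
    rw [hxl, hyl]; exact haLL
  obtain ⟨hb0, hs0⟩ := apc_aux_full β0 β0' σ02 σ02' hσ02 hβ0 hβ0' haf
  exact ⟨hb0, hb1, hs0, hs1⟩

/-- Theorem 2: identifiability of the plug-in age-period-cohort Lee-Carter model with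
two independent random-walk factors, under the constraints `∑ β⁰_x = ∑ β¹_x = 1` and
`β⁰ ≠ β¹`, for `X > 0` and `T > X + 2`. -/
theorem apc_random_walk_identifiable
    (X T : ℕ) (hX : 0 < X) (hT : X + 2 < T) (c0 c1 : ℝ)
    (α β0 β1 α' β0' β1' : Fin (X + 1) → ℝ)
    (μ0 μ1 σ02 σ12 σε2 μ0' μ1' σ02' σ12' σε2' : ℝ)
    (hβ0 : ∑ x, β0 x = 1) (hβ1 : ∑ x, β1 x = 1) (hβ01 : β0 ≠ β1)
    (hβ0' : ∑ x, β0' x = 1) (hβ1' : ∑ x, β1' x = 1) (hβ01' : β0' ≠ β1')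
    (hσ02 : 0 < σ02) (hσ12 : 0 < σ12) (hσε2 : 0 < σε2)
    (hσ02' : 0 < σ02') (hσ12' : 0 < σ12') (hσε2' : 0 < σε2')
    (hF : ∀ x : Fin (X + 1), ∀ t : ℕ, 1 ≤ t → t ≤ T →
      apcMean α β0 β1 μ0 μ1 c0 c1 x t = apcMean α' β0' β1' μ0' μ1' c0 c1 x t)
    (hG : ∀ x y : Fin (X + 1), ∀ s t : ℕ, 1 ≤ s → s ≤ T → 1 ≤ t → t ≤ T →
      apcCov β0 β1 σ02 σ12 σε2 x y s t = apcCov β0' β1' σ02' σ12' σε2' x y s t) :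
    α = α' ∧ β0 = β0' ∧ β1 = β1' ∧ μ0 = μ0' ∧ μ1 = μ1' ∧
      σ02 = σ02' ∧ σ12 = σ12' ∧ σε2 = σε2' := by
  have hvle : ∀ z : Fin (X+1), ((z:ℕ):ℝ) ≤ X := fun z => by
    exact_mod_cast Nat.cast_le.mpr (Nat.lt_succ_iff.mp z.isLt)
  -- Evaluate the covariance identity at (s, s + X): the mins resolve.
  have cov_eval : ∀ (x y : Fin (X+1)) (s : ℕ), 1 ≤ s → s + X ≤ T →
      β0 x * β0 y * σ02 * ((s:ℝ) - (x:ℕ) + X) + β1 x * β1 y * σ12 * s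
      = β0' x * β0' y * σ02' * ((s:ℝ) - (x:ℕ) + X) + β1' x * β1' y * σ12' * s := by
    intro x y s hs hsT
    have e := hG x y s (s+X) hs (by omega) (by omega) hsT
    have hcond : ¬(x = y ∧ s = s + X) := by rintro ⟨-, h⟩; omega
    simp only [apcCov, if_neg hcond] at e
    push_cast at e
    rw [min_eq_left (show (s:ℝ) - (x:ℕ) + X ≤ (s:ℝ) + X - (y:ℕ) + X by
          have := hvle x; have := hvle y; linarith),
        min_eq_left (show (s:ℝ) ≤ (s:ℝ) + X by
          have : (0:ℝ) ≤ X := Nat.cast_nonneg X; linarith)] at e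
    linarith
  -- Sum identity: a_{xy} + b_{xy} = a'_{xy} + b'_{xy} for all x, y.
  have hab : ∀ x y : Fin (X+1),
      β0 x * β0 y * σ02 + β1 x * β1 y * σ12
      = β0' x * β0' y * σ02' + β1' x * β1' y * σ12' := by
    intro x y
    have h1 := cov_eval x y 1 (by omega) (by omega)
    have h2 := cov_eval x y 2 (by omega) (by omega)
    push_cast at h1 h2
    linear_combination h2 - h1
  -- Intercept identity: a_{xy} (X - x) = a'_{xy} (X - x).
  have haX : ∀ x y : Fin (X+1),
      β0 x * β0 y * σ02 * ((X:ℝ) - (x:ℕ)) = β0' x * β0' y * σ02' * ((X:ℝ) - (x:ℕ)) := by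
    intro x y
    have h1 := cov_eval x y 1 (by omega) (by omega)
    have h2 := cov_eval x y 2 (by omega) (by omega)
    push_cast at h1 h2
    linear_combination 2 * h1 - h2
  -- a identified off (last, last).
  have ha : ∀ x y : Fin (X+1), (x:ℕ) < X ∨ (y:ℕ) < X →
      β0 x * β0 y * σ02 = β0' x * β0' y * σ02' := by
    intro x y hxy
    rcases hxy with hx | hy
    · have hne : (X:ℝ) - (x:ℕ) ≠ 0 := by
        have : ((x:ℕ):ℝ) < X := by exact_mod_cast hx
        intro h; linarith
      exact mul_right_cancel₀ hne (haX x y)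
    · have hne : (X:ℝ) - (y:ℕ) ≠ 0 := by
        have : ((y:ℕ):ℝ) < X := by exact_mod_cast hy
        intro h; linarith
      have := mul_right_cancel₀ hne (haX y x)
      linear_combination this
  -- b identified off (last, last).
  have hb : ∀ x y : Fin (X+1), (x:ℕ) < X ∨ (y:ℕ) < X →
      β1 x * β1 y * σ12 = β1' x * β1' y * σ12' := by
    intro x y hxy
    have := ha x y hxy
    linear_combination hab x y - this
  -- The pivot index: some coordinate below X where β0 or β1 is nonzero.
  have hpivot : ∃ x0 : Fin (X+1), (x0:ℕ) < X ∧ (β0 x0 ≠ 0 ∨ β1 x0 ≠ 0) := by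
    by_contra hc
    push_neg at hc
    apply hβ01
    have h0 : ∀ b : Fin (X+1), b ≠ Fin.last X → (b:ℕ) < X := by
      intro b hbne
      have h1 : (b:ℕ) ≤ X := Nat.lt_succ_iff.mp b.isLt
      have h2 : (b:ℕ) ≠ X := fun hv => hbne (Fin.ext (by simpa [Fin.last] using hv))
      omega
    have hlast0 : β0 (Fin.last X) = 1 := by
      rw [← hβ0]
      exact (Finset.sum_eq_single_of_mem _ (Finset.mem_univ _)
        (fun b _ hbne => (hc b (h0 b hbne)).1)).symm
    have hlast1 : β1 (Fin.last X) = 1 := by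
      rw [← hβ1]
      exact (Finset.sum_eq_single_of_mem _ (Finset.mem_univ _)
        (fun b _ hbne => (hc b (h0 b hbne)).2)).symm
    funext x
    by_cases hx : (x:ℕ) < X
    · rw [(hc x hx).1, (hc x hx).2]
    · have : x = Fin.last X := Fin.ext (by have := x.isLt; simp [Fin.last]; omega)
      rw [this, hlast0, hlast1]
  obtain ⟨x0, hx0X, hx0⟩ := hpivot
  -- Identify β0, β1, σ02, σ12 by the case lemma (two symmetric cases).
  have hmain : β0 = β0' ∧ β1 = β1' ∧ σ02 = σ02' ∧ σ12 = σ12' := by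
    rcases hx0 with h0 | h1
    · have := apc_aux_main β1 β0 β1' β0' σ12 σ02 σ12' σ02' hσ12 hσ02
        hβ1 hβ0 hβ1' hβ0'
        (fun x y hxy => hb x y hxy) (fun x y hxy => ha x y hxy)
        (by linear_combination hab (Fin.last X) (Fin.last X))
        x0 hx0X h0
      exact ⟨this.2.1, this.1, this.2.2.2, this.2.2.1⟩
    · have := apc_aux_main β0 β1 β0' β1' σ02 σ12 σ02' σ12' hσ02 hσ12
        hβ0 hβ1 hβ0' hβ1'
        (fun x y hxy => ha x y hxy) (fun x y hxy => hb x y hxy)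
        (hab (Fin.last X) (Fin.last X))
        x0 hx0X h1
      exact ⟨this.1, this.2.1, this.2.2.1, this.2.2.2⟩
  obtain ⟨hB0, hB1, hS0, hS1⟩ := hmain
  subst hB0; subst hB1; subst hS0; subst hS1
  -- Identify σε² using the diagonal at x = 0, s = t = 1.
  have hε : σε2 = σε2' := by
    have e := hG ⟨0, by omega⟩ ⟨0, by omega⟩ 1 1 (by omega) (by omega) (by omega) (by omega)
    norm_num [apcCov] at e
    linarith
  -- Mean function: slopes give β0 μ0 + β1 μ1, then separate using β0 ≠ β1.
  have hD : ∀ x : Fin (X+1), β0 x * μ0 + β1 x * μ1 = β0 x * μ0' + β1 x * μ1' := by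
    intro x
    have f1 := hF x 1 (by omega) (by omega)
    have f2 := hF x 2 (by omega) (by omega)
    simp only [apcMean] at f1 f2
    push_cast at f1 f2
    linear_combination f2 - f1
  have hsumD : μ0 + μ1 = μ0' + μ1' := by
    have h1 : ∑ x, (β0 x * μ0 + β1 x * μ1) = μ0 + μ1 := by
      rw [Finset.sum_add_distrib, ← Finset.sum_mul, ← Finset.sum_mul, hβ0, hβ1, one_mul, one_mul]
    have h2 : ∑ x, (β0 x * μ0' + β1 x * μ1') = μ0' + μ1' := by
      rw [Finset.sum_add_distrib, ← Finset.sum_mul, ← Finset.sum_mul, hβ0, hβ1, one_mul, one_mul]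
    rw [← h1, ← h2]
    exact Finset.sum_congr rfl fun x _ => hD x
  have hx1 : ∃ x1, β0 x1 ≠ β1 x1 := by
    by_contra hc
    push_neg at hc
    exact hβ01 (funext hc)
  obtain ⟨x1, hx1⟩ := hx1
  have hμ0 : μ0 = μ0' := by
    have h1 := hD x1
    have hz : (β0 x1 - β1 x1) * (μ0 - μ0') = 0 := by linear_combination h1 - β1 x1 * hsumD
    rcases mul_eq_zero.mp hz with hz | hz
    · exact absurd (sub_eq_zero.mp hz) hx1
    · linarith [sub_eq_zero.mp hz]
  have hμ1 : μ1 = μ1' := by linarith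
  -- Identify α from the mean at t = 1.
  have hα : α = α' := by
    funext x
    have f1 := hF x 1 (by omega) (by omega)
    simp only [apcMean] at f1
    rw [hμ0, hμ1] at f1
    linarith
  exact ⟨hα, rfl, rfl, hμ0, hμ1, rfl, rfl, hε⟩
end

section
/- Identifiability of the plug-in age-period Lee-Carter model with ARIMA(1,1,0) factor (Theorem 3). Fix integers X ≥ 0 and T ≥ 4 and a real number c. Let θ = (α, β, μ, ρ, σe², σε²) and θ̃ = (α̃, β̃, μ̃, ρ̃, σ̃e², σ̃ε²) be two parameter tuples in Θ_{(1,1,0)}, i.e. α, β, α̃, β̃ ∈ ℝ^{X+1} with ∑_{x=0}^X β_x = ∑_{x=0}^X β̃_x = 1, μ, μ̃ ∈ ℝ, ρ, ρ̃ ∈ (−1,1), and σe², σε², σ̃e², σ̃ε² > 0. If f_θ(x,t) = f_θ̃(x,t) for all x ∈ {0,…,X}, t ∈ {1,…,T}, and h_θ(x,y,s,t) = h_θ̃(x,y,s,t) for all x,y ∈ {0,…,X}, s,t ∈ {1,…,T}, then θ = θ̃. -/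
/-- Covariance function of the plug-in age-period Lee-Carter model with
ARIMA(1,1,0) factor:
`h_θ(x,y,s,t) = β_x β_y σe² [ min{s,t}/(1−ρ)² −
  ρ(ρ^{max{s,t}} − ρ^{|s−t|} + ρ^{min{s,t}} − 1)/((ρ−1)³(ρ+1)) ] + 1{x=y,s=t} σε²`. -/
noncomputable def arima110Cov {X : ℕ} (β : Fin (X + 1) → ℝ) (ρ σe2 σε2 : ℝ)
    (x y : Fin (X + 1)) (s t : ℕ) : ℝ :=
  β x * β y * σe2 *
      ((min s t : ℕ) / (1 - ρ) ^ 2 -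
        ρ * (ρ ^ max s t - ρ ^ (max s t - min s t) + ρ ^ min s t - 1) /
          ((ρ - 1) ^ 3 * (ρ + 1)))
    + (if x = y ∧ s = t then σε2 else 0)

set_option maxHeartbeats 1000000 in
/-- Theorem 3: identifiability of the plug-in age-period Lee-Carter model with
ARIMA(1,1,0) factor, under the constraint `∑ β_x = 1`, for `T ≥ 4`. -/
theorem ap_arima110_identifiable
    (X T : ℕ) (hT : 4 ≤ T) (c : ℝ)
    (α β α' β' : Fin (X + 1) → ℝ) (μ ρ σe2 σε2 μ' ρ' σe2' σε2' : ℝ)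
    (hβ : ∑ x, β x = 1) (hβ' : ∑ x, β' x = 1)
    (hρ : ρ ∈ Set.Ioo (-1 : ℝ) 1) (hρ' : ρ' ∈ Set.Ioo (-1 : ℝ) 1)
    (hσe2 : 0 < σe2) (hσε2 : 0 < σε2) (hσe2' : 0 < σe2') (hσε2' : 0 < σε2')
    (hf : ∀ x : Fin (X + 1), ∀ t : ℕ, 1 ≤ t → t ≤ T →
      apMean α β μ c x t = apMean α' β' μ' c x t)
    (hh : ∀ x y : Fin (X + 1), ∀ s t : ℕ, 1 ≤ s → s ≤ T → 1 ≤ t → t ≤ T →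
      arima110Cov β ρ σe2 σε2 x y s t = arima110Cov β' ρ' σe2' σε2' x y s t) :
    α = α' ∧ β = β' ∧ μ = μ' ∧ ρ = ρ' ∧ σe2 = σe2' ∧ σε2 = σε2' := by
  obtain ⟨hρ1, hρ2⟩ := hρ
  obtain ⟨hρ1', hρ2'⟩ := hρ'
  have hu : (1:ℝ) - ρ ≠ 0 := by intro h; nlinarith
  have hu' : (1:ℝ) - ρ' ≠ 0 := by intro h; nlinarith
  have hv : (1:ℝ) + ρ ≠ 0 := by intro h; nlinarith
  have hv' : (1:ℝ) + ρ' ≠ 0 := by intro h; nlinarith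
  -- summing lemma
  have sumlem : ∀ (γ : Fin (X+1) → ℝ), (∑ x, γ x = 1) → ∀ D : ℝ,
      ∑ x, ∑ y, γ x * γ y * D = D := by
    intro γ hγ D
    have h : ∑ x, ∑ y, γ x * γ y * D = (∑ x, γ x) * (∑ y, γ y) * D := by
      rw [Finset.sum_mul_sum, Finset.sum_mul]
      simp [Finset.sum_mul]
    rw [h, hγ]; ring
  -- pointwise covariance identities with s ≠ t
  have keyxy : ∀ x y : Fin (X+1), ∀ s t : ℕ, 1 ≤ s → s ≤ T → 1 ≤ t → t ≤ T → s ≠ t →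
      β x * β y * (σe2 * ((min s t : ℕ) / (1 - ρ) ^ 2 -
        ρ * (ρ ^ max s t - ρ ^ (max s t - min s t) + ρ ^ min s t - 1) /
          ((ρ - 1) ^ 3 * (ρ + 1)))) =
      β' x * β' y * (σe2' * ((min s t : ℕ) / (1 - ρ') ^ 2 -
        ρ' * (ρ' ^ max s t - ρ' ^ (max s t - min s t) + ρ' ^ min s t - 1) /
          ((ρ' - 1) ^ 3 * (ρ' + 1)))) := by
    intro x y s t hs1 hs2 ht1 ht2 hst
    have h := hh x y s t hs1 hs2 ht1 ht2
    rw [arima110Cov, arima110Cov, if_neg (fun hc => hst hc.2),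
      if_neg (fun hc => hst hc.2), add_zero, add_zero] at h
    linear_combination h
  have key : ∀ s t : ℕ, 1 ≤ s → s ≤ T → 1 ≤ t → t ≤ T → s ≠ t →
      σe2 * ((min s t : ℕ) / (1 - ρ) ^ 2 -
        ρ * (ρ ^ max s t - ρ ^ (max s t - min s t) + ρ ^ min s t - 1) /
          ((ρ - 1) ^ 3 * (ρ + 1))) =
      σe2' * ((min s t : ℕ) / (1 - ρ') ^ 2 -
        ρ' * (ρ' ^ max s t - ρ' ^ (max s t - min s t) + ρ' ^ min s t - 1) /
          ((ρ' - 1) ^ 3 * (ρ' + 1))) := by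
    intro s t hs1 hs2 ht1 ht2 hst
    calc σe2 * _ = ∑ x, ∑ y, β x * β y * (σe2 * ((min s t : ℕ) / (1 - ρ) ^ 2 -
        ρ * (ρ ^ max s t - ρ ^ (max s t - min s t) + ρ ^ min s t - 1) /
          ((ρ - 1) ^ 3 * (ρ + 1)))) := (sumlem β hβ _).symm
      _ = ∑ x, ∑ y, β' x * β' y * (σe2' * ((min s t : ℕ) / (1 - ρ') ^ 2 -
        ρ' * (ρ' ^ max s t - ρ' ^ (max s t - min s t) + ρ' ^ min s t - 1) /
          ((ρ' - 1) ^ 3 * (ρ' + 1)))) := by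
          exact Finset.sum_congr rfl (fun x _ => Finset.sum_congr rfl
            (fun y _ => keyxy x y s t hs1 hs2 ht1 ht2 hst))
      _ = σe2' * _ := sumlem β' hβ' _
  -- closed forms of the covariance kernel at small lags
  have g12 : ∀ τ : ℝ, 1 - τ ≠ 0 → 1 + τ ≠ 0 →
      ((min 1 2 : ℕ) : ℝ) / (1 - τ) ^ 2 -
        τ * (τ ^ max 1 2 - τ ^ (max 1 2 - min 1 2) + τ ^ min 1 2 - 1) /
          ((τ - 1) ^ 3 * (τ + 1)) = 1 / (1 - τ) := by
    intro τ h1 h2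
    have h3 : τ - 1 ≠ 0 := fun h => h1 (by linarith [sub_eq_zero.mp h])
    have h4 : τ + 1 ≠ 0 := fun h => h2 (by linarith)
    norm_num
    field_simp
    ring
  have g13 : ∀ τ : ℝ, 1 - τ ≠ 0 → 1 + τ ≠ 0 →
      ((min 1 3 : ℕ) : ℝ) / (1 - τ) ^ 2 -
        τ * (τ ^ max 1 3 - τ ^ (max 1 3 - min 1 3) + τ ^ min 1 3 - 1) /
          ((τ - 1) ^ 3 * (τ + 1)) = (1 + τ + τ^2) / ((1 - τ) * (1 + τ)) := by
    intro τ h1 h2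
    have h3 : τ - 1 ≠ 0 := fun h => h1 (by linarith [sub_eq_zero.mp h])
    have h4 : τ + 1 ≠ 0 := fun h => h2 (by linarith)
    norm_num
    field_simp
    ring
  have g14 : ∀ τ : ℝ, 1 - τ ≠ 0 → 1 + τ ≠ 0 →
      ((min 1 4 : ℕ) : ℝ) / (1 - τ) ^ 2 -
        τ * (τ ^ max 1 4 - τ ^ (max 1 4 - min 1 4) + τ ^ min 1 4 - 1) /
          ((τ - 1) ^ 3 * (τ + 1)) = (1 + τ^2) / (1 - τ) := by
    intro τ h1 h2
    have h3 : τ - 1 ≠ 0 := fun h => h1 (by linarith [sub_eq_zero.mp h])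
    have h4 : τ + 1 ≠ 0 := fun h => h2 (by linarith)
    norm_num
    field_simp
    ring
  have E1 : σe2 * (1 / (1 - ρ)) = σe2' * (1 / (1 - ρ')) := by
    have := key 1 2 (by norm_num) (by omega) (by norm_num) (by omega) (by norm_num)
    rwa [g12 ρ hu hv, g12 ρ' hu' hv'] at this
  have E2 : σe2 * ((1 + ρ + ρ^2) / ((1 - ρ) * (1 + ρ))) =
      σe2' * ((1 + ρ' + ρ'^2) / ((1 - ρ') * (1 + ρ'))) := by
    have := key 1 3 (by norm_num) (by omega) (by norm_num) (by omega) (by norm_num)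
    rwa [g13 ρ hu hv, g13 ρ' hu' hv'] at this
  have E3 : σe2 * ((1 + ρ^2) / (1 - ρ)) = σe2' * ((1 + ρ'^2) / (1 - ρ')) := by
    have := key 1 4 (by norm_num) (by omega) (by norm_num) (by omega) (by norm_num)
    rwa [g14 ρ hu hv, g14 ρ' hu' hv'] at this
  -- polynomial forms
  have P1 : σe2 * (1 - ρ') = σe2' * (1 - ρ) := by
    field_simp at E1; linarith
  have P2 : σe2 * (1 + ρ + ρ^2) * ((1 - ρ') * (1 + ρ')) =
      σe2' * (1 + ρ' + ρ'^2) * ((1 - ρ) * (1 + ρ)) := by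
    field_simp at E2; linarith
  have P3 : σe2 * (1 + ρ^2) * (1 - ρ') = σe2' * (1 + ρ'^2) * (1 - ρ) := by
    field_simp at E3; linarith
  have hP : 0 < σe2 * (1 - ρ') := by nlinarith
  have hsq : ρ^2 = ρ'^2 := by
    have h := P3
    rw [show σe2 * (1 + ρ^2) * (1 - ρ') = (1 + ρ^2) * (σe2 * (1 - ρ')) by ring,
      show σe2' * (1 + ρ'^2) * (1 - ρ) = (1 + ρ'^2) * (σe2' * (1 - ρ)) by ring, ← P1] at h
    have := mul_right_cancel₀ (ne_of_gt hP) h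
    linarith [this]
  have hcube : ρ^2 * (ρ' - ρ) = 0 := by
    have h := P2
    rw [show σe2 * (1 + ρ + ρ^2) * ((1 - ρ') * (1 + ρ')) =
      ((1 + ρ + ρ^2) * (1 + ρ')) * (σe2 * (1 - ρ')) by ring,
      show σe2' * (1 + ρ' + ρ'^2) * ((1 - ρ) * (1 + ρ)) =
      ((1 + ρ' + ρ'^2) * (1 + ρ)) * (σe2' * (1 - ρ)) by ring, ← P1] at h
    have h2 := mul_right_cancel₀ (ne_of_gt hP) h
    linear_combination h2 - (1 + ρ) * hsq
  have hρρ : ρ = ρ' := by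
    by_contra hne
    have h0 : ρ^2 = 0 := by
      rcases mul_eq_zero.mp hcube with h | h
      · exact h
      · exact absurd (by linarith [sub_eq_zero.mp h] : ρ = ρ') hne
    have : ρ = 0 := by nlinarith
    have : ρ' = 0 := by nlinarith
    exact hne (by linarith)
  subst hρρ
  have hσe : σe2 = σe2' := mul_right_cancel₀ hu P1
  subst hσe
  -- β
  have hK : σe2 * (1 / (1 - ρ)) ≠ 0 :=
    mul_ne_zero (ne_of_gt hσe2) (one_div_ne_zero hu)
  have hββ : β = β' := by
    funext x
    have e : ∀ y, β x * β y = β' x * β' y := by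
      intro y
      have h := keyxy x y 1 2 (by norm_num) (by omega) (by norm_num) (by omega) (by norm_num)
      rw [g12 ρ hu hv] at h
      have h2 : β x * β y * (σe2 * (1 / (1 - ρ))) = β' x * β' y * (σe2 * (1 / (1 - ρ))) := by
        linear_combination h
      exact mul_right_cancel₀ hK h2
    calc β x = β x * ∑ y, β y := by rw [hβ, mul_one]
      _ = ∑ y, β x * β y := by rw [Finset.mul_sum]
      _ = ∑ y, β' x * β' y := Finset.sum_congr rfl (fun y _ => e y)
      _ = β' x * ∑ y, β' y := by rw [Finset.mul_sum]
      _ = β' x := by rw [hβ', mul_one]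
  subst hββ
  -- σε2
  have hσε : σε2 = σε2' := by
    have h := hh 0 0 1 1 (by norm_num) (by omega) (by norm_num) (by omega)
    rw [arima110Cov, arima110Cov, if_pos ⟨rfl, rfl⟩, if_pos ⟨rfl, rfl⟩] at h
    linarith
  -- mean: μ and α
  have hμβ : ∀ x, β x * μ = β x * μ' := by
    intro x
    have h1 := hf x 1 (by norm_num) (by omega)
    have h2 := hf x 2 (by norm_num) (by omega)
    rw [apMean, apMean] at h1 h2
    push_cast at h1 h2
    linarith
  have hμ : μ = μ' := by
    have h : ∑ x, β x * μ = ∑ x, β x * μ' := Finset.sum_congr rfl (fun x _ => hμβ x)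
    rw [← Finset.sum_mul, ← Finset.sum_mul, hβ, one_mul, one_mul] at h
    exact h
  subst hμ
  have hα : α = α' := by
    funext x
    have h1 := hf x 1 (by norm_num) (by omega)
    rw [apMean, apMean] at h1
    linarith
  exact ⟨hα, rfl, rfl, rfl, rfl, hσε⟩
end

section
/- Identifiability of the plug-in age-period Lee-Carter model with ARIMA(0,1,1) factor (Theorem 4). Fix integers X ≥ 0 and T ≥ 2 and a real number c. Let θ = (α, β, μ, φ, σe², σε²) and θ̃ = (α̃, β̃, μ̃, φ̃, σ̃e², σ̃ε²) be two parameter tuples in Θ_{(0,1,1)}, i.e. α, β, α̃, β̃ ∈ ℝ^{X+1} with ∑_{x=0}^X β_x = ∑_{x=0}^X β̃_x = 1, μ, μ̃ ∈ ℝ, φ, φ̃ ∈ (−1,1), and σe², σε², σ̃e², σ̃ε² > 0. If f_θ(x,t) = f_θ̃(x,t) for all x ∈ {0,…,X}, t ∈ {1,…,T}, and k_θ(x,y,s,t) = k_θ̃(x,y,s,t) for all x,y ∈ {0,…,X}, s,t ∈ {1,…,T}, then θ = θ̃. -/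
/-- Covariance function of the plug-in age-period Lee-Carter model with
ARIMA(0,1,1) factor:
`k_θ(x,y,s,t) = β_x β_y σe² [ min{s,t}(φ+1)² − (1 + 1{s=t})φ ] + 1{x=y,s=t} σε²`. -/
noncomputable def arima011Cov {X : ℕ} (β : Fin (X + 1) → ℝ) (φ σe2 σε2 : ℝ)
    (x y : Fin (X + 1)) (s t : ℕ) : ℝ :=
  β x * β y * σe2 *
      ((min s t : ℕ) * (φ + 1) ^ 2 - (1 + (if s = t then (1 : ℝ) else 0)) * φ)
    + (if x = y ∧ s = t then σε2 else 0)

lemma sum2aux {X : ℕ} (b : Fin (X+1) → ℝ) (hb : ∑ x, b x = 1) (A : ℝ) :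
    ∑ x, ∑ y, b x * b y * A = A := by
  have h1 : ∀ x : Fin (X+1), ∑ y, b x * b y * A = b x * A := by
    intro x
    rw [← Finset.sum_mul, ← Finset.mul_sum, hb, mul_one]
  simp only [h1]
  rw [← Finset.sum_mul, hb, one_mul]

/-- Theorem 4: identifiability of the plug-in age-period Lee-Carter model with
ARIMA(0,1,1) factor, under the constraint `∑ β_x = 1`, for `T ≥ 2`. -/
theorem ap_arima011_identifiable
    (X T : ℕ) (hT : 2 ≤ T) (c : ℝ)
    (α β α' β' : Fin (X + 1) → ℝ) (μ φ σe2 σε2 μ' φ' σe2' σε2' : ℝ)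
    (hβ : ∑ x, β x = 1) (hβ' : ∑ x, β' x = 1)
    (hφ : φ ∈ Set.Ioo (-1 : ℝ) 1) (hφ' : φ' ∈ Set.Ioo (-1 : ℝ) 1)
    (hσe2 : 0 < σe2) (hσε2 : 0 < σε2) (hσe2' : 0 < σe2') (hσε2' : 0 < σε2')
    (hf : ∀ x : Fin (X + 1), ∀ t : ℕ, 1 ≤ t → t ≤ T →
      apMean α β μ c x t = apMean α' β' μ' c x t)
    (hk : ∀ x y : Fin (X + 1), ∀ s t : ℕ, 1 ≤ s → s ≤ T → 1 ≤ t → t ≤ T →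
      arima011Cov β φ σe2 σε2 x y s t = arima011Cov β' φ' σe2' σε2' x y s t) :
    α = α' ∧ β = β' ∧ μ = μ' ∧ φ = φ' ∧ σe2 = σe2' ∧ σε2 = σε2' := by
  obtain ⟨hφ1, hφ2⟩ := hφ
  obtain ⟨hφ'1, hφ'2⟩ := hφ'
  -- simplified covariance equations at (1,2), (1,1), (2,2)
  have h12 : ∀ x y : Fin (X+1),
      β x * β y * σe2 * ((φ+1)^2 - φ) = β' x * β' y * σe2' * ((φ'+1)^2 - φ') := by
    intro x y
    have h := hk x y 1 2 (by norm_num) (by omega) (by norm_num) (by omega)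
    simp only [arima011Cov] at h
    norm_num at h
    linarith [h]
  have hD : ∀ x y : Fin (X+1),
      β x * β y * σe2 * (φ+1)^2 = β' x * β' y * σe2' * (φ'+1)^2 := by
    intro x y
    have h11 := hk x y 1 1 (by norm_num) (by omega) (by norm_num) (by omega)
    have h22 := hk x y 2 2 (by norm_num) (by omega) (by norm_num) (by omega)
    simp only [arima011Cov] at h11 h22
    norm_num at h11 h22
    linarith [h11, h22]
  -- σε2
  have hε : σε2 = σε2' := by
    have h11 := hk 0 0 1 1 (by norm_num) (by omega) (by norm_num) (by omega)
    have h12' := hk 0 0 1 2 (by norm_num) (by omega) (by norm_num) (by omega)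
    have h22 := hk 0 0 2 2 (by norm_num) (by omega) (by norm_num) (by omega)
    simp only [arima011Cov] at h22 h12'
    norm_num at h22 h12'
    nlinarith [h22, h12']
  -- summed equations
  have e12 : σe2 * ((φ+1)^2 - φ) = σe2' * ((φ'+1)^2 - φ') := by
    have hL := sum2aux β hβ (σe2 * ((φ+1)^2 - φ))
    have hR := sum2aux β' hβ' (σe2' * ((φ'+1)^2 - φ'))
    rw [← hL, ← hR]
    refine Finset.sum_congr rfl fun x _ => Finset.sum_congr rfl fun y _ => ?_
    have := h12 x y
    ring_nf
    ring_nf at this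
    linarith
  have eD : σe2 * (φ+1)^2 = σe2' * (φ'+1)^2 := by
    have hL := sum2aux β hβ (σe2 * (φ+1)^2)
    have hR := sum2aux β' hβ' (σe2' * (φ'+1)^2)
    rw [← hL, ← hR]
    refine Finset.sum_congr rfl fun x _ => Finset.sum_congr rfl fun y _ => ?_
    have := hD x y
    ring_nf
    ring_nf at this
    linarith
  -- φ = φ'
  have hB : (0:ℝ) < φ'^2 + φ' + 1 := by nlinarith [sq_nonneg (2*φ' + 1)]
  have hB0 : (0:ℝ) < φ^2 + φ + 1 := by nlinarith [sq_nonneg (2*φ + 1)]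
  have hcross : (φ+1)^2 * (φ'^2 + φ' + 1) = (φ'+1)^2 * (φ^2 + φ + 1) := by
    have h1 : σe2 * (φ+1)^2 * (σe2' * ((φ'+1)^2 - φ')) =
        σe2' * (φ'+1)^2 * (σe2 * ((φ+1)^2 - φ)) := by rw [eD, e12]
    have hne : σe2 * σe2' ≠ 0 := by positivity
    have h2 : σe2 * σe2' * ((φ+1)^2 * (φ'^2 + φ' + 1)) =
        σe2 * σe2' * ((φ'+1)^2 * (φ^2 + φ + 1)) := by ring_nf; ring_nf at h1; linarith
    exact mul_left_cancel₀ hne h2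
  have hkey : (φ - φ') * (1 - φ * φ') = 0 := by linear_combination hcross
  have hpos : (0:ℝ) < 1 - φ * φ' := by nlinarith
  have hφeq : φ = φ' := by
    rcases mul_eq_zero.mp hkey with h | h
    · linarith
    · linarith
  -- σe2 = σe2'
  have hσeq : σe2 = σe2' := by
    rw [hφeq] at e12
    have := mul_right_cancel₀ (ne_of_gt (show (0:ℝ) < (φ'+1)^2 - φ' by nlinarith)) e12
    exact this
  -- β = β'
  have hβeq : β = β' := by
    funext x
    have hK : (0:ℝ) < σe2 * ((φ+1)^2 - φ) := by
      have : (0:ℝ) < (φ+1)^2 - φ := by nlinarith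
      positivity
    have hsum : ∀ z : Fin (X+1), ∑ y, β z * β y * (σe2 * ((φ+1)^2 - φ)) =
        β z * (σe2 * ((φ+1)^2 - φ)) := by
      intro z; rw [← Finset.sum_mul, ← Finset.mul_sum, hβ, mul_one]
    have hsum' : ∀ z : Fin (X+1), ∑ y, β' z * β' y * (σe2' * ((φ'+1)^2 - φ')) =
        β' z * (σe2' * ((φ'+1)^2 - φ')) := by
      intro z; rw [← Finset.sum_mul, ← Finset.mul_sum, hβ', mul_one]
    have hx : β x * (σe2 * ((φ+1)^2 - φ)) = β' x * (σe2' * ((φ'+1)^2 - φ')) := by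
      rw [← hsum x, ← hsum' x]
      refine Finset.sum_congr rfl fun y _ => ?_
      have := h12 x y
      ring_nf; ring_nf at this; linarith
    rw [hφeq, hσeq] at hx
    exact mul_right_cancel₀ (by rw [hφeq, hσeq] at hK; exact ne_of_gt hK) hx
  -- μ = μ'
  have hμeq : μ = μ' := by
    have h : ∀ x : Fin (X+1), β x * μ = β' x * μ' := by
      intro x
      have h1 := hf x 1 (by norm_num) (by omega)
      have h2 := hf x 2 (by norm_num) (by omega)
      simp only [apMean] at h1 h2
      norm_num at h1 h2
      linarith
    have := congrArg (fun g => ∑ x, g x * μ) (rfl : β = β)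
    calc μ = ∑ x, β x * μ := by rw [← Finset.sum_mul, hβ, one_mul]
    _ = ∑ x, β' x * μ' := Finset.sum_congr rfl fun x _ => h x
    _ = μ' := by rw [← Finset.sum_mul, hβ', one_mul]
  -- α = α'
  have hαeq : α = α' := by
    funext x
    have h1 := hf x 1 (by norm_num) (by omega)
    simp only [apMean] at h1
    rw [hβeq, hμeq] at h1
    norm_num at h1
    linarith
  exact ⟨hαeq, hβeq, hμeq, hφeq, hσeq, hε⟩
end

section
/- Necessity of the constraint β⁰ ≠ β¹ in Theorem 2 (Remark 2(i)). Let X ≥ 0 and T ≥ 1 be integers and c₀, c₁ ∈ ℝ. Then there exist two distinct parameter tuples θ = (α, β⁰, β¹, μ₀, μ₁, σ₀², σ₁², σε²) and θ̃ = (α̃, β̃⁰, β̃¹, μ̃₀, μ̃₁, σ̃₀², σ̃₁², σ̃ε²) with β⁰ = β¹, β̃⁰ = β̃¹, ∑_{x=0}^X β⁰_x = ∑_{x=0}^X β¹_x = ∑_{x=0}^X β̃⁰_x = ∑_{x=0}^X β̃¹_x = 1, and all variances strictly positive, such that F_θ(x,t) = F_θ̃(x,t) for all x ∈ {0,…,X},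 t ∈ {1,…,T}, and G_θ(x,y,s,t) = G_θ̃(x,y,s,t) for all x,y ∈ {0,…,X}, s,t ∈ {1,…,T}. (One may take μ₀ ≠ μ₁, β̃⁰ = β̃¹ = β⁰ = β¹, μ̃₀ = μ₁, μ̃₁ = μ₀, the same variances, and α̃_x = α_x + (X−x) β⁰_x (μ₀ − μ₁).) -/
/-- Remark 2(i): without the constraint `β⁰ ≠ β¹`, the plug-in age-period-cohort
Lee-Carter model loses identifiability: there exist two distinct parameter tuples with
`β⁰ = β¹` and `β̃⁰ = β̃¹` (all loading vectors summing to one, all variances positive)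
that produce identical mean and covariance functions. -/
theorem apc_needs_beta_constraint
    (X T : ℕ) (hT : 1 ≤ T) (c0 c1 : ℝ) :
    ∃ (α β0 β1 α' β0' β1' : Fin (X + 1) → ℝ)
      (μ0 μ1 σ02 σ12 σε2 μ0' μ1' σ02' σ12' σε2' : ℝ),
      β0 = β1 ∧ β0' = β1' ∧
      (∑ x, β0 x = 1) ∧ (∑ x, β1 x = 1) ∧
      (∑ x, β0' x = 1) ∧ (∑ x, β1' x = 1) ∧
      0 < σ02 ∧ 0 < σ12 ∧ 0 < σε2 ∧ 0 < σ02' ∧ 0 < σ12' ∧ 0 < σε2' ∧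
      (α, β0, β1, μ0, μ1, σ02, σ12, σε2) ≠ (α', β0', β1', μ0', μ1', σ02', σ12', σε2') ∧
      (∀ x : Fin (X + 1), ∀ t : ℕ, 1 ≤ t → t ≤ T →
        apcMean α β0 β1 μ0 μ1 c0 c1 x t = apcMean α' β0' β1' μ0' μ1' c0 c1 x t) ∧
      (∀ x y : Fin (X + 1), ∀ s t : ℕ, 1 ≤ s → s ≤ T → 1 ≤ t → t ≤ T →
        apcCov β0 β1 σ02 σ12 σε2 x y s t = apcCov β0' β1' σ02' σ12' σε2' x y s t) := by

  set β : Fin (X + 1) → ℝ := fun _ => (1 : ℝ) / (X + 1) with hβ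
  refine ⟨fun _ => 0, β, β, fun x => β x * ((x : ℕ) - (X : ℝ)), β, β,
    0, 1, 1, 1, 1, 1, 0, 1, 1, 1, rfl, rfl, ?_, ?_, ?_, ?_,
    one_pos, one_pos, one_pos, one_pos, one_pos, one_pos, ?_, ?_, ?_⟩
  · simp [hβ]; field_simp
  · simp [hβ]; field_simp
  · simp [hβ]; field_simp
  · simp [hβ]; field_simp
  · intro h
    have := congrArg (fun p => p.2.2.2.1) h
    simp at this
  · intro x t _ _
    simp only [apcMean]
    ring
  · intro x y s t _ _ _ _
    rfl
end

section
/- Covariance function of an ARIMA(0,1,1) process (appendix, Section on ARIMA(0,1,1)). Let T ≥ 1 be an integer, y₀, μ ∈ ℝ, φ ∈ ℝ, σ² > 0. On a probability space let e₀, e₁, …, e_T be mutually independent square-integrable real random variables with E[e_s] = 0 and Var(e_s) = σ² for all s. Define y_t = y₀ + μ t + ∑_{s=1}^t (e_s + φ e_{s−1}) for t = 1,…,T. Then E[y_t] = y₀ + μ t, and for all t, q ∈ {1,…,T}: Cov(y_t, y_q) = σ² [ min{t,q} (φ+1)² − (1 + 1{t=q}) φ ]. -/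
open MeasureTheory ProbabilityTheory

/-- Covariance of two real-valued random variables. -/
noncomputable def cov {Ω : Type*} [MeasurableSpace Ω] (P : Measure Ω) (f g : Ω → ℝ) : ℝ :=
  ∫ ω, (f ω - ∫ ω', f ω' ∂P) * (g ω - ∫ ω', g ω' ∂P) ∂P

section Aux

variable {Ω : Type*} [MeasurableSpace Ω] {P : Measure Ω} [IsProbabilityMeasure P]

lemma integrable_mul_of_memL2 {f g : Ω → ℝ} (hf : MemLp f 2 P) (hg : MemLp g 2 P) :
    Integrable (fun ω => f ω * g ω) P := by
  have h : MemLp (g • f) 1 P := hf.smul hg (hpqr := ⟨by rw [ENNReal.inv_two_add_inv_two, inv_one]⟩)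
  have h2 := memLp_one_iff_integrable.mp h
  have : (g • f) = fun ω => f ω * g ω := by
    funext ω; simp [mul_comm]
  rwa [this] at h2

lemma integral_sum_mul_sum
    {T : ℕ} {σ2 : ℝ}
    {e : ℕ → Ω → ℝ}
    (he2 : ∀ s, s ≤ T → MemLp (e s) 2 P)
    (hindep : iIndepFun (fun s : Fin (T + 1) => e s.val) P)
    (heMean : ∀ s, s ≤ T → ∫ ω, e s ω ∂P = 0)
    (heVar : ∀ s, s ≤ T → variance (e s) P = σ2)
    {S R : Finset ℕ} (hS : ∀ s ∈ S, s ≤ T) (hR : ∀ r ∈ R, r ≤ T) :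
    ∫ ω, (∑ s ∈ S, e s ω) * (∑ r ∈ R, e r ω) ∂P = (S ∩ R).card * σ2 := by
  have hint : ∀ s ∈ S, ∀ r ∈ R, Integrable (fun ω => e s ω * e r ω) P :=
    fun s hs r hr => integrable_mul_of_memL2 (he2 s (hS s hs)) (he2 r (hR r hr))
  have key : ∀ s ∈ S, ∀ r ∈ R, ∫ ω, e s ω * e r ω ∂P = if s = r then σ2 else 0 := by
    intro s hs r hr
    by_cases h : s = r
    · subst h
      rw [if_pos rfl]
      have hv := variance_eq_sub (μ := P) (he2 s (hS s hs))
      have hm : ∫ ω, e s ω ∂P = 0 := heMean s (hS s hs)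
      have hV : variance (e s) P = σ2 := heVar s (hS s hs)
      have hsq : (∫ ω, (e s ^ 2) ω ∂P) = ∫ ω, e s ω * e s ω ∂P := by
        apply integral_congr_ae
        filter_upwards with ω
        simp [sq]
      rw [hV] at hv
      have hm' : (∫ ω, e s ω ∂P : ℝ) ^ 2 = 0 := by rw [hm]; ring
      calc ∫ ω, e s ω * e s ω ∂P = (∫ ω, (e s ^ 2) ω ∂P) := hsq.symm
        _ = σ2 := by
            have : σ2 = (∫ ω, (e s ^ 2) ω ∂P) - (∫ ω, e s ω ∂P) ^ 2 := hv
            rw [hm'] at this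
            linarith
    · rw [if_neg h]
      have hs' : s < T + 1 := Nat.lt_succ_of_le (hS s hs)
      have hr' : r < T + 1 := Nat.lt_succ_of_le (hR r hr)
      have hne : (⟨s, hs'⟩ : Fin (T + 1)) ≠ ⟨r, hr'⟩ := by
        simp only [ne_eq, Fin.mk.injEq]
        exact h
      have hi : IndepFun (e s) (e r) P := hindep.indepFun hne
      have := hi.integral_mul_eq_mul_integral ((he2 s (hS s hs)).integrable one_le_two).aestronglyMeasurable
        ((he2 r (hR r hr)).integrable one_le_two).aestronglyMeasurable
      have hprod : ∫ ω, e s ω * e r ω ∂P = ∫ ω, (e s * e r) ω ∂P := rfl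
      rw [hprod, this, heMean s (hS s hs), zero_mul]
  calc ∫ ω, (∑ s ∈ S, e s ω) * (∑ r ∈ R, e r ω) ∂P
      = ∫ ω, ∑ s ∈ S, ∑ r ∈ R, e s ω * e r ω ∂P := by
        apply integral_congr_ae
        filter_upwards with ω
        rw [Finset.sum_mul_sum]
    _ = ∑ s ∈ S, ∫ ω, ∑ r ∈ R, e s ω * e r ω ∂P :=
        integral_finset_sum _ (fun s hs => integrable_finset_sum _ (fun r hr => hint s hs r hr))
    _ = ∑ s ∈ S, ∑ r ∈ R, ∫ ω, e s ω * e r ω ∂P :=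
        Finset.sum_congr rfl fun s hs => integral_finset_sum _ (fun r hr => hint s hs r hr)
    _ = ∑ s ∈ S, ∑ r ∈ R, (if s = r then σ2 else 0) :=
        Finset.sum_congr rfl fun s hs => Finset.sum_congr rfl fun r hr => key s hs r hr
    _ = ∑ s ∈ S, (if s ∈ R then σ2 else 0) :=
        Finset.sum_congr rfl fun s _ => Finset.sum_ite_eq R s (fun _ => σ2)
    _ = ∑ s ∈ S ∩ R, σ2 := by
        rw [Finset.sum_ite_mem]
    _ = (S ∩ R).card * σ2 := by
        rw [Finset.sum_const, nsmul_eq_mul]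

end Aux

/-- Moments of an ARIMA(0,1,1) process: with
`y_t = y₀ + μ t + ∑_{s=1}^t (e_s + φ e_{s−1})`, where `e₀, e₁, …, e_T` are mutually
independent, square-integrable, centred random variables of variance `σ²`, one has
`E[y_t] = y₀ + μ t` and, for `t, q ∈ {1,…,T}`,
`Cov(y_t, y_q) = σ² [ min{t,q}(φ+1)² − (1 + 1{t=q})φ ]`. -/
theorem arima011_moments
    (T : ℕ) (hT : 1 ≤ T)
    (y0 μ φ σ2 : ℝ) (hσ2 : 0 < σ2)
    (Ω : Type*) [MeasurableSpace Ω] (P : Measure Ω) [IsProbabilityMeasure P]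
    (e : ℕ → Ω → ℝ)
    (he2 : ∀ s, s ≤ T → MemLp (e s) 2 P)
    (hindep : iIndepFun (fun s : Fin (T + 1) => e s.val) P)
    (heMean : ∀ s, s ≤ T → ∫ ω, e s ω ∂P = 0)
    (heVar : ∀ s, s ≤ T → variance (e s) P = σ2)
    (y : ℕ → Ω → ℝ)
    (hy : ∀ t ω, y t ω = y0 + μ * t + ∑ s ∈ Finset.Icc 1 t, (e s ω + φ * e (s - 1) ω)) :
    (∀ t : ℕ, 1 ≤ t → t ≤ T → ∫ ω, y t ω ∂P = y0 + μ * t) ∧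
    (∀ t q : ℕ, 1 ≤ t → t ≤ T → 1 ≤ q → q ≤ T →
      cov P (y t) (y q) =
        σ2 * ((min t q : ℕ) * (φ + 1) ^ 2 - (1 + (if t = q then (1 : ℝ) else 0)) * φ)) := by
  -- The two building blocks
  set A : ℕ → Ω → ℝ := fun t ω => ∑ s ∈ Finset.Icc 1 t, e s ω with hA
  set B : ℕ → Ω → ℝ := fun t ω => ∑ s ∈ Finset.range t, e s ω with hB
  -- decomposition of y
  have hsplit : ∀ t ω, y t ω = (y0 + μ * t) + (A t ω + φ * B t ω) := by
    intro t ω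
    rw [hy t ω]
    have h1 : ∑ s ∈ Finset.Icc 1 t, (e s ω + φ * e (s - 1) ω)
        = (∑ s ∈ Finset.Icc 1 t, e s ω) + φ * ∑ s ∈ Finset.Icc 1 t, e (s - 1) ω := by
      rw [Finset.sum_add_distrib, Finset.mul_sum]
    have h2 : ∑ s ∈ Finset.Icc 1 t, e (s - 1) ω = ∑ s ∈ Finset.range t, e s ω := by
      rw [← Finset.Ico_add_one_right_eq_Icc, Finset.sum_Ico_eq_sum_range]
      simp
    rw [h1, h2]
    try ring
  -- index bounds
  have hIcc : ∀ t : ℕ, t ≤ T → ∀ s ∈ Finset.Icc 1 t, s ≤ T := by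
    intro t ht s hs
    rw [Finset.mem_Icc] at hs
    omega
  have hRange : ∀ t : ℕ, t ≤ T → ∀ s ∈ Finset.range t, s ≤ T := by
    intro t ht s hs
    rw [Finset.mem_range] at hs
    omega
  -- integrability
  have hInt : ∀ s, s ≤ T → Integrable (e s) P := fun s hs => (he2 s hs).integrable one_le_two
  have hIntA : ∀ t, t ≤ T → Integrable (A t) P := fun t ht =>
    integrable_finset_sum _ (fun s hs => hInt s (hIcc t ht s hs))
  have hIntB : ∀ t, t ≤ T → Integrable (B t) P := fun t ht =>
    integrable_finset_sum _ (fun s hs => hInt s (hRange t ht s hs))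
  have hIntZ : ∀ t, t ≤ T → Integrable (fun ω => A t ω + φ * B t ω) P := fun t ht =>
    (hIntA t ht).add ((hIntB t ht).const_mul φ)
  -- means
  have hMeanA : ∀ t, t ≤ T → ∫ ω, A t ω ∂P = 0 := by
    intro t ht
    rw [hA]
    rw [integral_finset_sum _ (fun s hs => hInt s (hIcc t ht s hs))]
    exact Finset.sum_eq_zero fun s hs => heMean s (hIcc t ht s hs)
  have hMeanB : ∀ t, t ≤ T → ∫ ω, B t ω ∂P = 0 := by
    intro t ht
    rw [hB]
    rw [integral_finset_sum _ (fun s hs => hInt s (hRange t ht s hs))]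
    exact Finset.sum_eq_zero fun s hs => heMean s (hRange t ht s hs)
  -- mean of y
  have hMeanY : ∀ t : ℕ, t ≤ T → ∫ ω, y t ω ∂P = y0 + μ * t := by
    intro t ht
    have : (fun ω => y t ω) = fun ω => (y0 + μ * t) + (A t ω + φ * B t ω) :=
      funext fun ω => hsplit t ω
    rw [this, integral_add (integrable_const _) (hIntZ t ht),
      integral_add (hIntA t ht) ((hIntB t ht).const_mul φ),
      integral_const_mul, hMeanA t ht, hMeanB t ht]
    simp
  refine ⟨fun t _ ht => hMeanY t ht, ?_⟩
  -- covariance: main computation for t ≤ q first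
  have main : ∀ t q : ℕ, 1 ≤ t → t ≤ T → 1 ≤ q → q ≤ T → t ≤ q →
      cov P (y t) (y q) =
        σ2 * ((min t q : ℕ) * (φ + 1) ^ 2 - (1 + (if t = q then (1 : ℝ) else 0)) * φ) := by
    intro t q ht1 htT hq1 hqT htq
    -- cov = ∫ Z t * Z q
    have hcov : cov P (y t) (y q)
        = ∫ ω, (A t ω + φ * B t ω) * (A q ω + φ * B q ω) ∂P := by
      unfold cov
      apply integral_congr_ae
      filter_upwards with ω
      rw [hMeanY t htT, hMeanY q hqT, hsplit t ω, hsplit q ω]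
      ring_nf
    rw [hcov]
    -- memℒp of A, B
    have hL2A : ∀ r, r ≤ T → MemLp (A r) 2 P := fun r hr =>
      memLp_finset_sum _ (fun s hs => he2 s (hIcc r hr s hs))
    have hL2B : ∀ r, r ≤ T → MemLp (B r) 2 P := fun r hr =>
      memLp_finset_sum _ (fun s hs => he2 s (hRange r hr s hs))
    -- the four cross moments
    have hAA : ∫ ω, A t ω * A q ω ∂P = ((Finset.Icc 1 t ∩ Finset.Icc 1 q).card : ℝ) * σ2 :=
      integral_sum_mul_sum he2 hindep heMean heVar (hIcc t htT) (hIcc q hqT)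
    have hAB : ∫ ω, A t ω * B q ω ∂P = ((Finset.Icc 1 t ∩ Finset.range q).card : ℝ) * σ2 :=
      integral_sum_mul_sum he2 hindep heMean heVar (hIcc t htT) (hRange q hqT)
    have hBA : ∫ ω, B t ω * A q ω ∂P = ((Finset.range t ∩ Finset.Icc 1 q).card : ℝ) * σ2 :=
      integral_sum_mul_sum he2 hindep heMean heVar (hRange t htT) (hIcc q hqT)
    have hBB : ∫ ω, B t ω * B q ω ∂P = ((Finset.range t ∩ Finset.range q).card : ℝ) * σ2 :=
      integral_sum_mul_sum he2 hindep heMean heVar (hRange t htT) (hRange q hqT)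
    -- integrability of the four products
    have iAA := integrable_mul_of_memL2 (hL2A t htT) (hL2A q hqT)
    have iAB := integrable_mul_of_memL2 (hL2A t htT) (hL2B q hqT)
    have iBA := integrable_mul_of_memL2 (hL2B t htT) (hL2A q hqT)
    have iBB := integrable_mul_of_memL2 (hL2B t htT) (hL2B q hqT)
    -- expand the product
    have hexp : ∫ ω, (A t ω + φ * B t ω) * (A q ω + φ * B q ω) ∂P
        = (∫ ω, A t ω * A q ω ∂P) + φ * (∫ ω, A t ω * B q ω ∂P)
          + φ * (∫ ω, B t ω * A q ω ∂P) + φ ^ 2 * (∫ ω, B t ω * B q ω ∂P) := by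
      have hpt : (fun ω => (A t ω + φ * B t ω) * (A q ω + φ * B q ω))
          = fun ω => A t ω * A q ω + φ * (A t ω * B q ω)
            + φ * (B t ω * A q ω) + φ ^ 2 * (B t ω * B q ω) := by
        funext ω; ring
      have i2 : Integrable (fun ω => φ * (A t ω * B q ω)) P := iAB.const_mul φ
      have i3 : Integrable (fun ω => φ * (B t ω * A q ω)) P := iBA.const_mul φ
      have i4 : Integrable (fun ω => φ ^ 2 * (B t ω * B q ω)) P := iBB.const_mul (φ ^ 2)
      have i12 : Integrable (fun ω => A t ω * A q ω + φ * (A t ω * B q ω)) P := iAA.add i2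
      have i123 : Integrable
          (fun ω => A t ω * A q ω + φ * (A t ω * B q ω) + φ * (B t ω * A q ω)) P := i12.add i3
      rw [hpt]
      rw [integral_add i123 i4, integral_add i12 i3, integral_add iAA i2,
        integral_const_mul, integral_const_mul, integral_const_mul]
    rw [hexp, hAA, hAB, hBA, hBB]
    -- compute the cardinalities
    have cAA : (Finset.Icc 1 t ∩ Finset.Icc 1 q).card = t := by
      have : Finset.Icc 1 t ∩ Finset.Icc 1 q = Finset.Icc 1 t := by
        ext s; simp only [Finset.mem_inter, Finset.mem_Icc]; omega
      rw [this, Nat.card_Icc]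
      omega
    have cBB : (Finset.range t ∩ Finset.range q).card = t := by
      have : Finset.range t ∩ Finset.range q = Finset.range t := by
        ext s; simp only [Finset.mem_inter, Finset.mem_range]; omega
      rw [this, Finset.card_range]
    have cBA : (Finset.range t ∩ Finset.Icc 1 q).card = t - 1 := by
      have : Finset.range t ∩ Finset.Icc 1 q = Finset.Ico 1 t := by
        ext s
        simp only [Finset.mem_inter, Finset.mem_range, Finset.mem_Icc, Finset.mem_Ico]
        omega
      rw [this, Nat.card_Ico]
    have hmin : min t q = t := min_eq_left htq
    rw [cAA, cBB, cBA, hmin]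
    have htR : ((t - 1 : ℕ) : ℝ) = (t : ℝ) - 1 := by
      rw [Nat.cast_sub ht1]; norm_num
    by_cases heq : t = q
    · -- t = q
      have cAB : (Finset.Icc 1 t ∩ Finset.range q).card = t - 1 := by
        have : Finset.Icc 1 t ∩ Finset.range q = Finset.Ico 1 t := by
          ext s
          simp only [Finset.mem_inter, Finset.mem_Icc, Finset.mem_range, Finset.mem_Ico]
          omega
        rw [this, Nat.card_Ico]
      rw [cAB, if_pos heq, htR]
      ring
    · -- t < q
      have htq' : t < q := lt_of_le_of_ne htq heq
      have cAB : (Finset.Icc 1 t ∩ Finset.range q).card = t := by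
        have : Finset.Icc 1 t ∩ Finset.range q = Finset.Icc 1 t := by
          ext s
          simp only [Finset.mem_inter, Finset.mem_Icc, Finset.mem_range]
          omega
        rw [this, Nat.card_Icc]
        omega
      rw [cAB, if_neg heq, htR]
      ring
  -- symmetry to conclude
  intro t q ht1 htT hq1 hqT
  rcases le_total t q with h | h
  · exact main t q ht1 htT hq1 hqT h
  · have hsymm : cov P (y t) (y q) = cov P (y q) (y t) := by
      unfold cov
      apply integral_congr_ae
      filter_upwards with ω
      ring
    rw [hsymm, main q t hq1 hqT ht1 htT h]
    have h1 : min q t = min t q := min_comm q t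
    have h2 : (if q = t then (1 : ℝ) else 0) = (if t = q then (1 : ℝ) else 0) := by
      by_cases hqt : q = t
      · rw [if_pos hqt, if_pos hqt.symm]
      · rw [if_neg hqt, if_neg (fun h => hqt h.symm)]
    rw [h1, h2]
end

section
/- Combined closed form of the ARIMA(1,1,0) covariance (equation (11) as a finite-sum identity). For every real ρ with ρ ≠ 1 and ρ ≠ −1 and all integers t, q ≥ 1, writing m = min{t,q} and M = max{t,q}: m/(1−ρ²) + (2/(1−ρ²)) ∑_{s=2}^{m} ∑_{r=1}^{s−1} ρ^{s−r} + (1/(1−ρ²)) ∑_{s=m+1}^{M} ∑_{r=1}^{m} ρ^{s−r} = m/(1−ρ)² − ρ(ρ^{M} − ρ^{|t−q|} + ρ^{m} − 1)/((ρ−1)³(ρ+1)). -/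
lemma inner2 (ρ : ℝ) (m s : ℕ) (h : m ≤ s) :
    (ρ - 1) * ∑ r ∈ Finset.Icc 1 m, ρ ^ (s - r) = ρ ^ s - ρ ^ (s - m) := by
  induction m with
  | zero => simp
  | succ m ih =>
    rw [Finset.sum_Icc_succ_top (by omega)]
    have h1 : s - m = (s - (m + 1)) + 1 := by omega
    rw [mul_add, ih (by omega), h1, pow_succ]
    ring

lemma S1c (ρ : ℝ) (m : ℕ) (hm : 1 ≤ m) :
    (ρ - 1) ^ 2 * ∑ s ∈ Finset.Icc 2 m, ∑ r ∈ Finset.Icc 1 (s - 1), ρ ^ (s - r)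
      = ρ ^ (m + 1) - ρ ^ 2 - ((m : ℝ) - 1) * ρ * (ρ - 1) := by
  induction m with
  | zero => omega
  | succ m ih =>
    rcases Nat.eq_or_lt_of_le hm with h | h
    · have : m = 0 := by omega
      subst this; simp
    · have hm' : 1 ≤ m := by omega
      rw [Finset.sum_Icc_succ_top (by omega), mul_add, ih hm']
      have key : (ρ - 1) ^ 2 * ∑ r ∈ Finset.Icc 1 (m + 1 - 1), ρ ^ (m + 1 - r)
          = (ρ - 1) * (ρ ^ (m + 1) - ρ) := by
        have := inner2 ρ (m + 1 - 1) (m + 1) (by omega)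
        have h2 : m + 1 - (m + 1 - 1) = 1 := by omega
        rw [h2, pow_one] at this
        rw [sq, mul_assoc, this]
      rw [key]
      push_cast
      ring

lemma S2c (ρ : ℝ) (m d : ℕ) (hm : 1 ≤ m) :
    (ρ - 1) ^ 2 * ∑ s ∈ Finset.Icc (m + 1) (m + d), ∑ r ∈ Finset.Icc 1 m, ρ ^ (s - r)
      = ρ ^ (m + d + 1) - ρ ^ (m + 1) - ρ ^ (d + 1) + ρ := by
  induction d with
  | zero => rw [Finset.Icc_eq_empty (by omega)]; simp only [Finset.sum_empty, mul_zero,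
      Nat.add_zero, pow_one]; ring
  | succ d ih =>
    have : m + (d + 1) = (m + d) + 1 := by omega
    rw [this, Finset.sum_Icc_succ_top (by omega), mul_add, ih]
    have key : (ρ - 1) ^ 2 * ∑ r ∈ Finset.Icc 1 m, ρ ^ (m + d + 1 - r)
        = (ρ - 1) * (ρ ^ (m + d + 1) - ρ ^ (d + 1)) := by
      have := inner2 ρ m (m + d + 1) (by omega)
      have h2 : m + d + 1 - m = d + 1 := by omega
      rw [h2] at this
      rw [sq, mul_assoc, this]
    rw [key]
    ring

lemma main_lemma (ρ : ℝ) (hρ1 : ρ ≠ 1) (hρ2 : ρ ≠ -1) (m d : ℕ) (hm : 1 ≤ m) :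
    (m : ℝ) / (1 - ρ ^ 2) +
        2 / (1 - ρ ^ 2) *
          ∑ s ∈ Finset.Icc 2 m, ∑ r ∈ Finset.Icc 1 (s - 1), ρ ^ (s - r) +
        1 / (1 - ρ ^ 2) *
          ∑ s ∈ Finset.Icc (m + 1) (m + d), ∑ r ∈ Finset.Icc 1 m, ρ ^ (s - r) =
      (m : ℝ) / (1 - ρ) ^ 2 -
        ρ * (ρ ^ (m + d) - ρ ^ d + ρ ^ m - 1) / ((ρ - 1) ^ 3 * (ρ + 1)) := by
  have h1 : ρ - 1 ≠ 0 := sub_ne_zero.mpr hρ1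
  have h2 : ρ + 1 ≠ 0 := by intro h; apply hρ2; linarith
  have hs : (ρ - 1) ^ 2 ≠ 0 := pow_ne_zero _ h1
  have h3 : (1 : ℝ) - ρ ^ 2 ≠ 0 := by
    intro h
    have h' : (ρ - 1) * (ρ + 1) = 0 := by linear_combination -h
    rcases mul_eq_zero.mp h' with h'' | h'' <;> [exact h1 h''; exact h2 h'']
  have h4 : (1 : ℝ) - ρ ≠ 0 := fun h => hρ1 (by linarith)
  have e1 : ∑ s ∈ Finset.Icc 2 m, ∑ r ∈ Finset.Icc 1 (s - 1), ρ ^ (s - r)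
      = (ρ ^ (m + 1) - ρ ^ 2 - ((m : ℝ) - 1) * ρ * (ρ - 1)) / (ρ - 1) ^ 2 := by
    field_simp
    linarith [S1c ρ m hm]
  have e2 : ∑ s ∈ Finset.Icc (m + 1) (m + d), ∑ r ∈ Finset.Icc 1 m, ρ ^ (s - r)
      = (ρ ^ (m + d + 1) - ρ ^ (m + 1) - ρ ^ (d + 1) + ρ) / (ρ - 1) ^ 2 := by
    field_simp
    linarith [S2c ρ m d hm]
  rw [e1, e2, show m + d + 1 = (m + d) + 1 from rfl, pow_succ ρ (m+d), pow_add ρ m d,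
    pow_succ ρ m, pow_succ ρ d]
  field_simp
  ring

/-- Combined closed form of the ARIMA(1,1,0) covariance (equation (11) as a finite-sum
identity): for `ρ ≠ 1`, `ρ ≠ −1` and integers `t, q ≥ 1`, with `m = min{t,q}` and
`M = max{t,q}`,
`m/(1−ρ²) + (2/(1−ρ²)) ∑_{s=2}^{m} ∑_{r=1}^{s−1} ρ^{s−r}
   + (1/(1−ρ²)) ∑_{s=m+1}^{M} ∑_{r=1}^{m} ρ^{s−r}
 = m/(1−ρ)² − ρ(ρ^M − ρ^{|t−q|} + ρ^m − 1)/((ρ−1)³(ρ+1))`. -/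
theorem arima110_cov_closed_form
    (ρ : ℝ) (hρ1 : ρ ≠ 1) (hρ2 : ρ ≠ -1) (t q : ℕ) (ht : 1 ≤ t) (hq : 1 ≤ q) :
    (min t q : ℕ) / (1 - ρ ^ 2 : ℝ) +
        2 / (1 - ρ ^ 2) *
          ∑ s ∈ Finset.Icc 2 (min t q), ∑ r ∈ Finset.Icc 1 (s - 1), ρ ^ (s - r) +
        1 / (1 - ρ ^ 2) *
          ∑ s ∈ Finset.Icc (min t q + 1) (max t q), ∑ r ∈ Finset.Icc 1 (min t q), ρ ^ (s - r) =
      (min t q : ℕ) / (1 - ρ) ^ 2 -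
        ρ * (ρ ^ max t q - ρ ^ (max t q - min t q) + ρ ^ min t q - 1) /
          ((ρ - 1) ^ 3 * (ρ + 1)) := by
  have hM : max t q = min t q + (max t q - min t q) := by omega
  have hm : 1 ≤ min t q := le_min ht hq
  rw [hM]
  have := main_lemma ρ hρ1 hρ2 (min t q) (max t q - min t q) hm
  simpa using this
end

section
/- Non-vanishing of the ARIMA(1,1,0) covariance kernel (step in the proof of Theorem 3). Let T > 2 be an integer and let ρ ∈ (−1,1) with ρ ≠ 0. Then it is not the case that s/(1−ρ)² − ρ(ρ^{T} + ρ^{s} − ρ^{T−s} − 1)/((ρ−1)³(ρ+1)) = 0 for all s ∈ {1,…,T−1}; that is, there exists s ∈ {1,…,T−1} with s/(1−ρ)² − ρ(ρ^{T} + ρ^{s} − ρ^{T−s} − 1)/((ρ−1)³(ρ+1)) ≠ 0. -/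
/-- Non-vanishing of the ARIMA(1,1,0) covariance kernel (step in the proof of
Theorem 3): for `T > 2` and `ρ ∈ (−1,1)` with `ρ ≠ 0`, the kernel
`s/(1−ρ)² − ρ(ρ^T + ρ^s − ρ^{T−s} − 1)/((ρ−1)³(ρ+1))` cannot vanish for all
`s ∈ {1,…,T−1}`. -/
theorem arima110_kernel_not_all_zero
    (T : ℕ) (hT : 2 < T) (ρ : ℝ) (hρ : ρ ∈ Set.Ioo (-1 : ℝ) 1) (hρ0 : ρ ≠ 0) :
    ∃ s : ℕ, 1 ≤ s ∧ s ≤ T - 1 ∧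
      (s : ℝ) / (1 - ρ) ^ 2 -
          ρ * (ρ ^ T + ρ ^ s - ρ ^ (T - s) - 1) / ((ρ - 1) ^ 3 * (ρ + 1)) ≠ 0 := by
  obtain ⟨h1, h2⟩ := hρ
  refine ⟨1, le_refl 1, by omega, ?_⟩
  have hne1 : (1 - ρ) ≠ 0 := by intro h; nlinarith
  have hne2 : (ρ - 1) ≠ 0 := by intro h; nlinarith
  have hne3 : (ρ + 1) ≠ 0 := by intro h; nlinarith
  obtain ⟨k, hk⟩ : ∃ k, T = k + 1 := ⟨T - 1, by omega⟩
  subst hk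
  have hTs : (k + 1) - 1 = k := by omega
  rw [hTs]
  have key : (1 : ℝ) / (1 - ρ) ^ 2 -
      ρ * (ρ ^ (k + 1) + ρ ^ 1 - ρ ^ k - 1) / ((ρ - 1) ^ 3 * (ρ + 1)) =
      (1 - ρ ^ (k + 1)) / ((1 - ρ) ^ 2 * (ρ + 1)) := by
    rw [pow_succ]
    field_simp
    ring
  push_cast
  rw [key]
  have habs : |ρ ^ (k + 1)| < 1 := by
    rw [abs_pow]
    exact pow_lt_one₀ (abs_nonneg ρ) (abs_lt.mpr ⟨h1, h2⟩) (by omega)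
  have hnum : (1 : ℝ) - ρ ^ (k + 1) ≠ 0 := by
    intro h
    have := abs_lt.mp habs
    nlinarith [this.2]
  exact div_ne_zero hnum (mul_ne_zero (pow_ne_zero 2 hne1) hne3)
end
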